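/- arXiv:2002.05214 — 3 statements merged into one kernel-verified Lean document; each statement's English description precedes it below -/
import Mathlib

section
/- Let α be a pseudo-Hermitian magnetic curve in a Sasakian manifold with contact angle θ and strength q, i.e. ∇̂_{E₁}E₁ = (-q + 2cos θ)φE₁ where η(E₁) = cos θ. Then the first pseudo-Hermitian curvature satisfies k̂₁ = |−q + 2cos θ| · sin θ, a constant. In particular, if cos θ = q/2 or sin θ = 0, then α is a pseudo-Hermitian geodesic. -/
open scoped RealInnerProductSpace

/-- For a pseudo-Hermitian magnetic curve with contact angle `θ ∈ [0, π]` and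
strength `q`, i.e. `∇̂_{E₁}E₁ = (-q + 2cos θ) φE₁` with `η(E₁) = cos θ`, the first
pseudo-Hermitian curvature is `k̂₁ = ‖∇̂_{E₁}E₁‖ = |−q + 2cos θ| sin θ`, a constant.
In particular if `cos θ = q/2` or `sin θ = 0` then `∇̂_{E₁}E₁ = 0`, i.e. the curve
is a pseudo-Hermitian geodesic. Here `v = E₁` at a point and `η(·) = ⟪·, ξ⟫`. -/
theorem pseudo_hermitian_magnetic_first_curvature
    {V : Type*} [NormedAddCommGroup V] [InnerProductSpace ℝ V]
    (φ : V → V) (ξ : V)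
    (hcompat : ∀ X Y : V, ⟪φ X, φ Y⟫ = ⟪X, Y⟫ - ⟪X, ξ⟫ * ⟪Y, ξ⟫)
    (θ q : ℝ) (hθ : θ ∈ Set.Icc 0 Real.pi)
    (v : V) (hv : ‖v‖ = 1) (hslant : ⟪v, ξ⟫ = Real.cos θ) :
    ‖(-q + 2 * Real.cos θ) • φ v‖ = |(-q + 2 * Real.cos θ)| * Real.sin θ ∧
      ((Real.cos θ = q / 2 ∨ Real.sin θ = 0) → (-q + 2 * Real.cos θ) • φ v = 0) := by
  have hφ : ‖φ v‖ = Real.sin θ := by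
    have h1 : ⟪φ v, φ v⟫ = Real.sin θ ^ 2 := by
      rw [hcompat, real_inner_self_eq_norm_sq, hv, hslant, Real.sin_sq]
      ring
    have h2 : ‖φ v‖ ^ 2 = Real.sin θ ^ 2 := by
      rw [← real_inner_self_eq_norm_sq, h1]
    have hs : 0 ≤ Real.sin θ := Real.sin_nonneg_of_mem_Icc hθ
    nlinarith [norm_nonneg (φ v)]
  refine ⟨by rw [norm_smul, Real.norm_eq_abs, hφ], ?_⟩
  rintro (h | h)
  · have : -q + 2 * Real.cos θ = 0 := by rw [h]; ring
    simp [this]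
  · have : φ v = 0 := by
      have := hφ; rw [h] at this; exact norm_eq_zero.mp this
    simp [this]
end

section
/- Let λ ≠ 0, and for i = 1,…,n let αᵢ(t) = (cᵢ/λ)sin(λt + dᵢ) + hᵢ, α_{n+i}(t) = (−cᵢ/λ)cos(λt + dᵢ) + h_{n+i}, and α_{2n+1}(t) = 2t cos θ + Σᵢ [ (−cᵢ²/(4λ²))(2(λt+dᵢ) + sin(2(λt+dᵢ))) + (cᵢh_{n+i}/λ)sin(λt+dᵢ) ] + h_{2n+1}, with Σᵢ cᵢ² = 4sin²θ. Then α'_{2n+1}(t) = 2cos θ + Σᵢ α'ᵢ(t)·α_{n+i}(t) and Σ_{i=1}^{2n} (α'ᵢ(t))² = 4 sin²θ for all t. -/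
open scoped BigOperators

/-!
With `u = λt + d`, the first `2n` coordinates have derivatives `c cos u` and `c sin u`, so the
squared speed is `Σ cᵢ² = 4 sin² θ`. For the last coordinate, `d/dt (2u + sin 2u) = 4λ cos² u`
(by `cos 2u = 2cos² u - 1`), so its `i`-th summand differentiates to
`c cos u · (-(c/λ) cos u + h)`, which is exactly `αᵢ' α_{n+i}`.
-/

namespace MagneticCurve

variable {lam : ℝ}

lemma hasDerivAt_div_mul_sin_add (hlam : lam ≠ 0) (c d h t : ℝ) :
    HasDerivAt (fun t => c / lam * Real.sin (lam * t + d) + h)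
      (c * Real.cos (lam * t + d)) t := by
  have hu : HasDerivAt (fun t => lam * t + d) lam t := (hasDerivAt_const_mul lam).add_const d
  refine (hu.sin.const_mul (c / lam)).add_const h |>.congr_deriv ?_
  field_simp

lemma hasDerivAt_neg_div_mul_cos_add (hlam : lam ≠ 0) (c d h t : ℝ) :
    HasDerivAt (fun t => -c / lam * Real.cos (lam * t + d) + h)
      (c * Real.sin (lam * t + d)) t := by
  have hu : HasDerivAt (fun t => lam * t + d) lam t := (hasDerivAt_const_mul lam).add_const d
  refine (hu.cos.const_mul (-c / lam)).add_const h |>.congr_deriv ?_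
  field_simp

lemma hasDerivAt_vertical_term (hlam : lam ≠ 0) (c d h t : ℝ) :
    HasDerivAt (fun t => -c ^ 2 / (4 * lam ^ 2) *
        (2 * (lam * t + d) + Real.sin (2 * (lam * t + d))) +
        c * h / lam * Real.sin (lam * t + d))
      (c * Real.cos (lam * t + d) * (-c / lam * Real.cos (lam * t + d) + h)) t := by
  have hu : HasDerivAt (fun t => lam * t + d) lam t := (hasDerivAt_const_mul lam).add_const d
  have h2u : HasDerivAt (fun t => 2 * (lam * t + d)) (2 * lam) t := hu.const_mul 2
  refine ((h2u.add h2u.sin).const_mul (-c ^ 2 / (4 * lam ^ 2))).add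
    (hu.sin.const_mul (c * h / lam)) |>.congr_deriv ?_
  rw [Real.cos_two_mul]
  field_simp
  ring

end MagneticCurve

open MagneticCurve in
/-- The curves of case (a) in the classification of pseudo-Hermitian magnetic
curves in `ℝ^{2n+1}(-3)` (with `λ = q - 2cos θ ≠ 0`), given by
`αᵢ = (cᵢ/λ) sin(λt + dᵢ) + hᵢ`, `α_{n+i} = (−cᵢ/λ) cos(λt + dᵢ) + h_{n+i}` and
the stated `α_{2n+1}`, satisfy the slant condition
`α'_{2n+1} = 2cos θ + Σ α'ᵢ α_{n+i}` and the unit-speed condition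
`Σ_{i=1}^{2n} (α'ᵢ)² = 4 sin²θ`. -/
theorem magnetic_curve_parametrization_nonzero_lambda
    (n : ℕ) (θ lam : ℝ) (hlam : lam ≠ 0)
    (c d h₁ h₂ : Fin n → ℝ) (hlast : ℝ)
    (hc : ∑ i, (c i) ^ 2 = 4 * Real.sin θ ^ 2) :
    let A : Fin n → ℝ → ℝ := fun i t =>
      c i / lam * Real.sin (lam * t + d i) + h₁ i
    let B : Fin n → ℝ → ℝ := fun i t =>
      -(c i) / lam * Real.cos (lam * t + d i) + h₂ i
    let Z : ℝ → ℝ := fun t =>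
      2 * t * Real.cos θ +
        (∑ i, (-(c i) ^ 2 / (4 * lam ^ 2) *
            (2 * (lam * t + d i) + Real.sin (2 * (lam * t + d i))) +
          c i * h₂ i / lam * Real.sin (lam * t + d i))) + hlast
    ∀ t : ℝ,
      deriv Z t = 2 * Real.cos θ + ∑ i, deriv (A i) t * B i t ∧
        (∑ i, ((deriv (A i) t) ^ 2 + (deriv (B i) t) ^ 2)) =
          4 * Real.sin θ ^ 2 := by
  intro A B Z t
  have dA i : deriv (A i) t = c i * Real.cos (lam * t + d i) :=
    (hasDerivAt_div_mul_sin_add hlam (c i) (d i) (h₁ i) t).deriv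
  have dB i : deriv (B i) t = c i * Real.sin (lam * t + d i) :=
    (hasDerivAt_neg_div_mul_cos_add hlam (c i) (d i) (h₂ i) t).deriv
  have hlin : HasDerivAt (fun t => 2 * t * Real.cos θ) (2 * Real.cos θ) t :=
    (hasDerivAt_const_mul 2).mul_const (Real.cos θ)
  have hZ : HasDerivAt Z (2 * Real.cos θ + ∑ i, deriv (A i) t * B i t) t := by
    simp only [dA]
    exact (hlin.add (HasDerivAt.fun_sum fun i _ =>
      hasDerivAt_vertical_term hlam (c i) (d i) (h₂ i) t)).add_const hlast
  refine ⟨hZ.deriv, ?_⟩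
  calc ∑ i, ((deriv (A i) t) ^ 2 + (deriv (B i) t) ^ 2)
      = ∑ i, c i ^ 2 := by
        refine Finset.sum_congr rfl fun i _ => ?_
        rw [dA, dB]
        linear_combination c i ^ 2 * Real.sin_sq_add_cos_sq (lam * t + d i)
    _ = 4 * Real.sin θ ^ 2 := hc
end

section
/- Let q = 2cos θ and let αᵢ(t) = cᵢt + dᵢ for i = 1,…,2n and α_{2n+1}(t) = 2t cos θ + Σ_{i=1}^n cᵢ((c_{n+i}/2)t² + d_{n+i}t) + c_{2n+1}, with q² + Σ_{i=1}^{2n} cᵢ² = 4. Then the slant condition α'_{2n+1} = 2cos θ + Σ_{i=1}^n α'ᵢ·α_{n+i} and the unit-speed condition Σ_{i=1}^{2n}(α'ᵢ)² = 4sin²θ hold for all t. -/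
theorem hasDerivAt_const_mul_add (a b t : ℝ) : HasDerivAt (fun s => a * s + b) a t := by
  simpa using ((hasDerivAt_id t).const_mul a).add_const b

theorem deriv_const_mul_add (a b t : ℝ) : deriv (fun s => a * s + b) t = a :=
  (hasDerivAt_const_mul_add a b t).deriv

theorem hasDerivAt_half_mul_sq_add_mul (a b t : ℝ) :
    HasDerivAt (fun s => a / 2 * s ^ 2 + b * s) (a * t + b) t :=
  (((hasDerivAt_pow 2 t).const_mul (a / 2)).add
    ((hasDerivAt_id' t).const_mul b)).congr_deriv (by ring)

theorem eq_four_mul_sin_sq_of_sq_two_mul_cos_add (θ S : ℝ) (h : (2 * Real.cos θ) ^ 2 + S = 4) :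
    S = 4 * Real.sin θ ^ 2 := by
  linear_combination h - 4 * Real.sin_sq_add_cos_sq θ

/-- The curves of case (b) in the classification of pseudo-Hermitian magnetic
curves in `ℝ^{2n+1}(-3)` (with `q = 2cos θ`), given by `αᵢ = cᵢ t + dᵢ`
(`i = 1, …, 2n`) and the stated `α_{2n+1}`, satisfy the slant condition
`α'_{2n+1} = 2cos θ + Σ α'ᵢ α_{n+i}` and the unit-speed condition
`Σ_{i=1}^{2n} (α'ᵢ)² = 4 sin²θ`, given `q² + Σ cᵢ² = 4`. -/
theorem magnetic_curve_parametrization_zero_lambda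
    (n : ℕ) (θ q : ℝ)
    (c₁ c₂ : Fin n → ℝ) (clast : ℝ) (d₁ d₂ : Fin n → ℝ)
    (hq : q = 2 * Real.cos θ)
    (hnorm : q ^ 2 + ∑ i, ((c₁ i) ^ 2 + (c₂ i) ^ 2) = 4) :
    let A : Fin n → ℝ → ℝ := fun i t => c₁ i * t + d₁ i
    let B : Fin n → ℝ → ℝ := fun i t => c₂ i * t + d₂ i
    let Z : ℝ → ℝ := fun t =>
      2 * t * Real.cos θ +
        (∑ i, c₁ i * (c₂ i / 2 * t ^ 2 + d₂ i * t)) + clast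
    ∀ t : ℝ,
      deriv Z t = 2 * Real.cos θ + ∑ i, deriv (A i) t * B i t ∧
        (∑ i, ((deriv (A i) t) ^ 2 + (deriv (B i) t) ^ 2)) =
          4 * Real.sin θ ^ 2 := by
  intro A B Z t
  have hA (i : Fin n) : deriv (A i) t = c₁ i := deriv_const_mul_add _ _ t
  have hB (i : Fin n) : deriv (B i) t = c₂ i := deriv_const_mul_add _ _ t
  have hZ : HasDerivAt Z (2 * Real.cos θ + ∑ i, c₁ i * B i t) t := by
    have hlin : HasDerivAt (fun s : ℝ => 2 * s * Real.cos θ) (2 * Real.cos θ) t := by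
      simpa using ((hasDerivAt_id' t).const_mul 2).mul_const (Real.cos θ)
    exact (hlin.add (HasDerivAt.fun_sum fun i _ =>
      (hasDerivAt_half_mul_sq_add_mul (c₂ i) (d₂ i) t).const_mul (c₁ i))).add_const clast
  refine ⟨by simp only [hZ.deriv, hA], ?_⟩
  simp only [hA, hB]
  exact eq_four_mul_sin_sq_of_sq_two_mul_cos_add θ _ (hq ▸ hnorm)
end
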